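/- arXiv:1701.08726 — 6 statements merged into one kernel-verified Lean document; each statement's English description precedes it below -/
import Mathlib

section
/- Let φ: G → G' be a graph homomorphism and k = max_{v ∈ V(G')} |φ^{-1}(v)|. Then Hun(G) ≤ k · Hun(G'). In particular, if H is a subgraph of G then Hun(H) ≤ Hun(G). -/
open Finset
open scoped Classical

variable {V : Type*} [Fintype V]

/-- Open neighborhood of a set of vertices. -/
noncomputable def nbhd (G : SimpleGraph V) (S : Finset V) : Finset V :=
  Finset.univ.filter fun w => ∃ v ∈ S, G.Adj v w

/-- Possible rabbit positions after playing the strategy `L`, starting from `S`. -/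
noncomputable def rabbitFrom (G : SimpleGraph V) (S : Finset V) (L : List (Finset V)) : Finset V :=
  L.foldl (fun R H => nbhd G (R \ H)) S

/-- A strategy wins if the set of possible rabbit positions is eventually empty. -/
def Wins (G : SimpleGraph V) (L : List (Finset V)) : Prop :=
  rabbitFrom G Finset.univ L = ∅

/-- The hunter number: minimum over winning strategies of the max number of simultaneous shots. -/
noncomputable def hunterNumber (G : SimpleGraph V) : ℕ :=
  sInf {k | ∃ L : List (Finset V), Wins G L ∧ ∀ s ∈ L, s.card ≤ k}

/-! Pulling a winning strategy for `G'` back along `φ : G →g G'` (shoot every vertex whose image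
is shot) wins on `G`: by induction on the rounds, `φ` maps the possible rabbit positions in `G`
into those in `G'`, since an unshot rabbit at `v` has an unshot image `φ v`, and an edge `v w` of
`G` gives the edge `φ v φ w` of `G'`. A shot at `S` pulls back to at most `k * #S` shots when
every fibre of `φ` has at most `k` vertices. -/

lemma hunterNumber_le_of_wins {G : SimpleGraph V} {L : List (Finset V)} {k : ℕ}
    (hL : Wins G L) (hk : ∀ s ∈ L, s.card ≤ k) : hunterNumber G ≤ k :=
  Nat.sInf_le ⟨L, hL, hk⟩

lemma wins_singleton_univ (G : SimpleGraph V) : Wins G [Finset.univ] := by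
  simp [Wins, rabbitFrom, nbhd]

lemma exists_wins_card_le_hunterNumber (G : SimpleGraph V) :
    ∃ L : List (Finset V), Wins G L ∧ ∀ s ∈ L, s.card ≤ hunterNumber G :=
  Nat.sInf_mem (s := {k | ∃ L : List (Finset V), Wins G L ∧ ∀ s ∈ L, s.card ≤ k})
    ⟨_, [Finset.univ], wins_singleton_univ G, fun _ hs => by
      rw [List.mem_singleton.mp hs]⟩

section Comap

variable {V' : Type*}

lemma card_filter_map_mem_le {φ : V → V'} {k : ℕ}
    (hφ : ∀ w, (univ.filter fun v => φ v = w).card ≤ k) (S : Finset V') :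
    (univ.filter fun v => φ v ∈ S).card ≤ k * S.card :=
  card_le_mul_card_image_of_maps_to (fun _ hv => (mem_filter.mp hv).2) k fun w _ =>
    (card_le_card (filter_subset_filter _ (filter_subset _ _))).trans (hφ w)

variable [Fintype V'] {G : SimpleGraph V} {G' : SimpleGraph V'} (φ : G →g G')

lemma mapsTo_nbhd_sdiff_comap {R : Finset V} {R' : Finset V'} (hR : Set.MapsTo φ R R')
    (H' : Finset V') :
    Set.MapsTo φ (nbhd G (R \ univ.filter fun v => φ v ∈ H')) (nbhd G' (R' \ H')) := by
  intro w hw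
  simp only [nbhd, coe_filter, mem_filter, mem_univ, true_and, Set.mem_ofPred_eq, mem_sdiff]
    at hw ⊢
  obtain ⟨v, ⟨hvR, hvH⟩, hvw⟩ := hw
  exact ⟨φ v, ⟨hR hvR, hvH⟩, φ.map_adj hvw⟩

lemma mapsTo_rabbitFrom_comap (L : List (Finset V')) {R : Finset V} {R' : Finset V'}
    (hR : Set.MapsTo φ R R') :
    Set.MapsTo φ (rabbitFrom G R (L.map fun S => univ.filter fun v => φ v ∈ S))
      (rabbitFrom G' R' L) := by
  induction L generalizing R R' with
  | nil => exact hR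
  | cons H' L ih => exact ih (mapsTo_nbhd_sdiff_comap φ hR H')

lemma Wins.comap {L : List (Finset V')} (hL : Wins G' L) :
    Wins G (L.map fun S => univ.filter fun v => φ v ∈ S) := by
  have h := mapsTo_rabbitFrom_comap φ L (R := univ) (R' := univ) fun _ _ => by simp
  rw [Wins] at hL
  rwa [hL, coe_empty, Set.mapsTo_empty_iff, coe_eq_empty] at h

theorem hunterNumber_le_mul_of_hom {k : ℕ}
    (hφ : ∀ w, (univ.filter fun v => φ v = w).card ≤ k) :
    hunterNumber G ≤ k * hunterNumber G' := by
  obtain ⟨L, hL, hcard⟩ := exists_wins_card_le_hunterNumber G'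
  refine hunterNumber_le_of_wins (hL.comap φ) ?_
  simp only [List.mem_map, forall_exists_index, and_imp, forall_apply_eq_imp_iff₂]
  exact fun S hS => (card_filter_map_mem_le hφ S).trans (Nat.mul_le_mul_left k (hcard S hS))

end Comap

theorem hunterNumber_mono {G H : SimpleGraph V} (h : H ≤ G) :
    hunterNumber H ≤ hunterNumber G := by
  simpa using hunterNumber_le_mul_of_hom (SimpleGraph.Hom.ofLE h) (k := 1) fun _ =>
    card_le_one.mpr fun _ ha _ hb => by simp_all

/-- If $φ : G → G'$ is a graph homomorphism with maximum fiber size $k$, then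
$Hun(G) ≤ k·Hun(G')$; in particular subgraphs have smaller hunter number. -/
theorem hunterNumber_le_of_hom {V V' : Type*} [Fintype V] [Fintype V']
    (G : SimpleGraph V) (G' : SimpleGraph V') (φ : G →g G') (k : ℕ)
    (hk : k = Finset.univ.sup fun w : V' => (Finset.univ.filter fun v => φ v = w).card) :
    hunterNumber G ≤ k * hunterNumber G' ∧
      ∀ H : SimpleGraph V, H ≤ G → hunterNumber H ≤ hunterNumber G :=
  ⟨hunterNumber_le_mul_of_hom φ fun w =>
      hk ▸ le_sup (f := fun w => (univ.filter fun v => φ v = w).card) (mem_univ w),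
    fun _ => hunterNumber_mono⟩
end

section
/- If the degeneracy of G is at least k (i.e., G contains a subgraph of minimum degree at least k), then Hun(G) ≥ k. -/
open Finset
open scoped Classical

variable {V : Type*} [Fintype V]

/-!
A set `s` in which every vertex has at least `k` neighbours can never be cleared by fewer than
`k` shots per round: if the rabbit may be anywhere in `s`, then after shooting a set `H` with
`#H < k` each `w ∈ s` still has an unshot neighbour in `s`, from which the rabbit may have moved
to `w`. So `s` stays inside the set of possible rabbit positions, which therefore never empties.
-/

namespace SimpleGraph

variable {G : SimpleGraph V}

theorem mem_nbhd {S : Finset V} {w : V} : w ∈ nbhd G S ↔ ∃ v ∈ S, G.Adj v w := by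
  simp [nbhd]

@[simp]
theorem nbhd_empty : nbhd G ∅ = ∅ := by
  ext w
  simp [mem_nbhd]

theorem rabbitFrom_cons (R H : Finset V) (L : List (Finset V)) :
    rabbitFrom G R (H :: L) = rabbitFrom G (nbhd G (R \ H)) L :=
  rfl

theorem wins_univ : Wins G [Finset.univ] := by
  simp [Wins, rabbitFrom]

theorem mem_nbhd_sdiff_of_card_lt {s R H : Finset V} {w : V} (hsR : s ⊆ R)
    (hH : #H < #(nbhd G {w} ∩ s)) : w ∈ nbhd G (R \ H) := by
  obtain ⟨v, hv, hvH⟩ := not_subset.mp fun hsub => (card_le_card hsub).not_gt hH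
  obtain ⟨hvw, hvs⟩ := mem_inter.mp hv
  obtain ⟨u, hu, hadj⟩ := mem_nbhd.mp hvw
  rw [mem_singleton.mp hu] at hadj
  exact mem_nbhd.mpr ⟨v, mem_sdiff.mpr ⟨hsR hvs, hvH⟩, hadj.symm⟩

theorem subset_rabbitFrom_of_card_lt {s : Finset V} {k : ℕ}
    (hdeg : ∀ v ∈ s, k ≤ #(nbhd G {v} ∩ s)) :
    ∀ (L : List (Finset V)) (R : Finset V), (∀ H ∈ L, #H < k) → s ⊆ R →
      s ⊆ rabbitFrom G R L
  | [], _, _, hsR => hsR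
  | H :: L, R, hL, hsR => by
    rw [rabbitFrom_cons]
    refine subset_rabbitFrom_of_card_lt hdeg L _ (fun H' hH' => hL H' (.tail H hH')) ?_
    exact fun w hw => mem_nbhd_sdiff_of_card_lt hsR ((hL H (.head L)).trans_le (hdeg w hw))

end SimpleGraph

open SimpleGraph

/-- If $G$ contains a (nonempty) subgraph of minimum degree at least $k$,
then $Hun(G) ≥ k$. -/
theorem degeneracy_le_hunterNumber {V : Type*} [Fintype V] (G : SimpleGraph V) (k : ℕ)
    (h : ∃ s : Finset V, s.Nonempty ∧ ∀ v ∈ s, k ≤ ((nbhd G {v}) ∩ s).card) :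
    k ≤ hunterNumber G := by
  obtain ⟨s, ⟨w, hw⟩, hdeg⟩ := h
  refine le_csInf ⟨Fintype.card V, [univ], wins_univ, by simp [card_le_univ]⟩ ?_
  rintro m ⟨L, hwin, hcard⟩
  by_contra! hmk
  have hs : s ⊆ rabbitFrom G univ L :=
    subset_rabbitFrom_of_card_lt hdeg L univ (fun H hH => (hcard H hH).trans_lt hmk)
      (subset_univ s)
  exact notMem_empty w (hwin ▸ hs hw)
end

section
/- Let G be a connected bipartite graph with parts E, O. If a hunter strategy H respects parity (its shots alternate between the two parts starting with O) and catches every rabbit that starts on a vertex of O, then there is a winning hunter strategy for arbitrary rabbit starting position using the same maximum number of simultaneous shots. Specifically, if H has odd length then H·H wins, and if H has even length then H·(∅)·H wins. -/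
/-!
Split the starting set `univ` into `O` and `Oᶜ`. Rabbits starting in `O` are caught by `L`.
Since every step moves a rabbit to the other part, a rabbit starting in `Oᶜ` that survives `L`
stands in `O` if `L` has odd length, and after one more idle step also if `L` has even length;
the second copy of `L` then catches it.
-/

open Finset
open scoped Classical

variable {V : Type*} [Fintype V]

lemma nbhd_subset_of_adj (G : SimpleGraph V) {S B : Finset V}
    (h : ∀ v ∈ S, ∀ w, G.Adj v w → w ∈ B) : nbhd G S ⊆ B := by
  intro w hw
  obtain ⟨v, hv, hvw⟩ := (mem_filter.mp hw).2
  exact h v hv w hvw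

lemma nbhd_mono (G : SimpleGraph V) {S T : Finset V} (h : S ⊆ T) : nbhd G S ⊆ nbhd G T :=
  nbhd_subset_of_adj G fun v hv w hvw => mem_filter.mpr ⟨mem_univ w, v, h hv, hvw⟩

lemma nbhd_union (G : SimpleGraph V) (A B : Finset V) :
    nbhd G (A ∪ B) = nbhd G A ∪ nbhd G B := by
  ext w
  simp only [nbhd, mem_filter, mem_univ, true_and, mem_union, or_and_right, exists_or]

@[simp]
lemma rabbitFrom_nil (G : SimpleGraph V) (S : Finset V) : rabbitFrom G S [] = S :=
  rfl

@[simp]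
lemma rabbitFrom_cons (G : SimpleGraph V) (S H : Finset V) (L : List (Finset V)) :
    rabbitFrom G S (H :: L) = rabbitFrom G (nbhd G (S \ H)) L :=
  rfl

lemma rabbitFrom_append (G : SimpleGraph V) (S : Finset V) (L₁ L₂ : List (Finset V)) :
    rabbitFrom G S (L₁ ++ L₂) = rabbitFrom G (rabbitFrom G S L₁) L₂ :=
  List.foldl_append

lemma rabbitFrom_mono (G : SimpleGraph V) (L : List (Finset V)) {S T : Finset V} (h : S ⊆ T) :
    rabbitFrom G S L ⊆ rabbitFrom G T L := by
  induction L generalizing S T with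
  | nil => exact h
  | cons H L ih => exact ih (nbhd_mono G (sdiff_subset_sdiff h subset_rfl))

lemma rabbitFrom_union (G : SimpleGraph V) (L : List (Finset V)) (A B : Finset V) :
    rabbitFrom G (A ∪ B) L = rabbitFrom G A L ∪ rabbitFrom G B L := by
  induction L generalizing A B with
  | nil => rfl
  | cons H L ih => rw [rabbitFrom_cons, union_sdiff_distrib, nbhd_union, ih]; rfl

lemma rabbitFrom_eq_empty_of_subset (G : SimpleGraph V) (L : List (Finset V)) {S T : Finset V}
    (hT : rabbitFrom G T L = ∅) (h : S ⊆ T) : rabbitFrom G S L = ∅ :=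
  subset_empty.mp (hT ▸ rabbitFrom_mono G L h)

lemma rabbitFrom_univ_eq_compl (G : SimpleGraph V) (L : List (Finset V)) {O : Finset V}
    (hO : rabbitFrom G O L = ∅) : rabbitFrom G univ L = rabbitFrom G Oᶜ L := by
  rw [← union_compl O, rabbitFrom_union, hO, empty_union]

lemma rabbitFrom_subset_of_alternating (G : SimpleGraph V) (L : List (Finset V))
    {A B S : Finset V} (hAB : ∀ v ∈ A, ∀ w, G.Adj v w → w ∈ B)
    (hBA : ∀ v ∈ B, ∀ w, G.Adj v w → w ∈ A) (hS : S ⊆ A) :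
    rabbitFrom G S L ⊆ if Even L.length then A else B := by
  induction L generalizing A B S with
  | nil => simpa using hS
  | cons H L ih =>
    have hstep : nbhd G (S \ H) ⊆ B :=
      nbhd_subset_of_adj G fun v hv => hAB v (hS (mem_sdiff.mp hv).1)
    have hrest := ih hBA hAB hstep
    by_cases he : Even L.length <;> simpa [he, Nat.even_add_one] using hrest

theorem bipartite_parity_strategy_extension_general {V : Type*} [Fintype V]
    (G : SimpleGraph V) (O : Finset V)
    (hbip : ∀ v w, G.Adj v w → (v ∈ O ↔ w ∉ O))
    (L : List (Finset V))
    (hwin : rabbitFrom G O L = ∅) :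
    (Odd L.length → Wins G (L ++ L)) ∧
      (Even L.length → Wins G (L ++ [∅] ++ L)) := by
  have hOc : ∀ v ∈ O, ∀ w, G.Adj v w → w ∈ Oᶜ := fun v hv w hvw =>
    mem_compl.mpr ((hbip v w hvw).mp hv)
  have hO : ∀ v ∈ Oᶜ, ∀ w, G.Adj v w → w ∈ O := fun v hv w hvw =>
    not_not.mp fun hw => mem_compl.mp hv ((hbip v w hvw).mpr hw)
  have hfirst := rabbitFrom_subset_of_alternating G L hO hOc subset_rfl
  rw [← rabbitFrom_univ_eq_compl G L hwin] at hfirst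
  refine ⟨fun hodd => ?_, fun heven => ?_⟩
  · rw [if_neg (Nat.not_even_iff_odd.mpr hodd)] at hfirst
    rw [Wins, rabbitFrom_append]
    exact rabbitFrom_eq_empty_of_subset G L hwin hfirst
  · rw [if_pos heven] at hfirst
    have hidle : rabbitFrom G (rabbitFrom G univ L) [∅] ⊆ O := by
      simpa using nbhd_subset_of_adj G fun v hv => hO v (hfirst hv)
    rw [Wins, rabbitFrom_append, rabbitFrom_append]
    exact rabbitFrom_eq_empty_of_subset G L hwin hidle

/-- For a connected bipartite graph with parts $O$ and $Oᶜ$, a parity-respecting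
strategy that catches every rabbit starting in $O$ extends to a fully winning strategy:
doubling it (with an idle step inserted if its length is even). -/
theorem bipartite_parity_strategy_extension {V : Type*} [Fintype V]
    (G : SimpleGraph V) (hconn : G.Connected) (O : Finset V)
    (hbip : ∀ v w, G.Adj v w → (v ∈ O ↔ w ∉ O))
    (L : List (Finset V))
    (hpar : ∀ (i : ℕ) (h : i < L.length), L.get ⟨i, h⟩ ⊆ if Even i then O else Oᶜ)
    (hwin : rabbitFrom G O L = ∅) :
    (Odd L.length → Wins G (L ++ L)) ∧
      (Even L.length → Wins G (L ++ [∅] ++ L)) :=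
  bipartite_parity_strategy_extension_general G O hbip L hwin
end

section
/- In the hypercube Q^n, if C is an initial segment of the weightlex order restricted to even-weight vertices, then N(C) is an initial segment of the weightlex order restricted to odd-weight vertices (and symmetrically with even and odd interchanged). -/
open Finset
open scoped Classical

variable {V : Type*} [Fintype V]

/-- The hypercube graph on subsets of `Fin n`: adjacent iff symmetric difference a singleton. -/
noncomputable def Q (n : ℕ) : SimpleGraph (Finset (Fin n)) where
  Adj x y := (symmDiff x y).card = 1
  symm := by
    constructor
    intro x y h
    rwa [symmDiff_comm]
  loopless := by
    constructor
    intro x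
    simp [symmDiff_self]

/-- Strict weightlex order: smaller weight, or equal weight and the minimum of the
symmetric difference belongs to the first set. -/
def wlexLt {n : ℕ} (x y : Finset (Fin n)) : Prop :=
  x.card < y.card ∨
    (x.card = y.card ∧ ∃ a ∈ x, a ∉ y ∧ ∀ b ∈ symmDiff x y, a ≤ b)

/-- `S` is an initial segment of weightlex order restricted to the class `P`. -/
def IsInitSeg {n : ℕ} (P : Finset (Fin n) → Prop) (S : Finset (Finset (Fin n))) : Prop :=
  (∀ x ∈ S, P x) ∧ ∀ x y, y ∈ S → P x → wlexLt x y → x ∈ S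

/-!
If `x <wlex y` have the same parity and `c ~ y`, some neighbour `c'` of `x` satisfies
`c' ≤wlex c`. When `|x| < |c|`, remove any element of `x`. Otherwise `c = y - e` and `|x| = |y|`
with `a = min (x △ y) ∈ x`; removing `e` from `x` (if `e ∈ x`) or else `max x` keeps `a` as the
lexicographic witness against `y - e`, or, when `a = max x`, produces `c` itself.
Downward closure of `C` then gives downward closure of `N(C)`.
-/
lemma mem_nbhd {G : SimpleGraph V} {S : Finset V} {w : V} :
    w ∈ nbhd G S ↔ ∃ v ∈ S, G.Adj v w := by
  simp [nbhd]

open scoped symmDiff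

section Hypercube

variable {n : ℕ}

lemma Q_adj_iff {c y : Finset (Fin n)} :
    (Q n).Adj c y ↔ ∃ e, (e ∉ y ∧ c = insert e y) ∨ (e ∈ y ∧ c = y.erase e) := by
  change (c ∆ y).card = 1 ↔ _
  rw [card_eq_one]
  constructor
  · rintro ⟨e, he⟩
    have hmem : ∀ b, b ∈ c ∆ y ↔ b = e := by simp [he]
    refine ⟨e, ?_⟩
    by_cases hey : e ∈ y
    · refine Or.inr ⟨hey, ext fun b => ?_⟩
      have := hmem b
      simp only [mem_symmDiff, mem_erase] at this ⊢
      grind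
    · refine Or.inl ⟨hey, ext fun b => ?_⟩
      have := hmem b
      simp only [mem_symmDiff, mem_insert] at this ⊢
      grind
  · rintro ⟨e, ⟨he, rfl⟩ | ⟨he, rfl⟩⟩ <;>
      exact ⟨e, ext fun b => by by_cases hb : b = e <;> simp [mem_symmDiff, hb, he]⟩

lemma Q_adj_erase {x : Finset (Fin n)} {a : Fin n} (ha : a ∈ x) : (Q n).Adj (x.erase a) x :=
  Q_adj_iff.mpr ⟨a, Or.inr ⟨ha, rfl⟩⟩

lemma card_eq_of_Q_adj {c y : Finset (Fin n)} (h : (Q n).Adj c y) :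
    c.card = y.card + 1 ∨ c.card + 1 = y.card := by
  obtain ⟨e, ⟨he, rfl⟩ | ⟨he, rfl⟩⟩ := Q_adj_iff.mp h
  · exact Or.inl (card_insert_of_notMem he)
  · exact Or.inr (card_erase_add_one he)

lemma exists_Q_adj_wlexLe_of_card_lt {x c : Finset (Fin n)} (h : x.card < c.card) :
    ∃ c', (Q n).Adj c' x ∧ (c' = c ∨ wlexLt c' c) := by
  obtain rfl | ⟨a, ha⟩ := x.eq_empty_or_nonempty
  · obtain ⟨a, ha⟩ := card_pos.mp h
    refine ⟨{a}, by simpa using (Q_adj_erase (mem_singleton_self a)).symm, ?_⟩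
    obtain hc | hc := (Nat.one_le_iff_ne_zero.mpr (card_pos.mp h).card_ne_zero).eq_or_lt
    · obtain ⟨b, rfl⟩ := card_eq_one.mp hc.symm
      exact Or.inl (by rw [mem_singleton.mp ha])
    · exact Or.inr (Or.inl (by rwa [card_singleton]))
  · refine ⟨x.erase a, Q_adj_erase ha, Or.inr (Or.inl ?_)⟩
    rw [card_erase_of_mem ha]
    omega

lemma exists_Q_adj_wlexLe_erase {x y : Finset (Fin n)} {a e : Fin n} (hcard : x.card = y.card)
    (hax : a ∈ x) (hay : a ∉ y) (hmin : ∀ b ∈ x ∆ y, a ≤ b) (hey : e ∈ y) :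
    ∃ c', (Q n).Adj c' x ∧ (c' = y.erase e ∨ wlexLt c' (y.erase e)) := by
  have hea : e ≠ a := fun h => hay (h ▸ hey)
  have hcard' : ∀ u ∈ x, (x.erase u).card = (y.erase e).card := fun u hu => by
    rw [card_erase_of_mem hu, card_erase_of_mem hey, hcard]
  by_cases hex : e ∈ x
  · refine ⟨x.erase e, Q_adj_erase hex, Or.inr (Or.inr ⟨hcard' e hex, a, ?_, ?_, ?_⟩)⟩
    · exact mem_erase.mpr ⟨hea.symm, hax⟩
    · exact fun h => hay (mem_of_mem_erase h)
    · intro b hb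
      apply hmin
      simp only [mem_symmDiff, mem_erase] at hb ⊢
      tauto
  -- Now `a < e`, so removing `max x` keeps `a` as the witness, unless `a = max x`.
  have hae : a < e := (hmin e (mem_symmDiff.mpr (Or.inr ⟨hey, hex⟩))).lt_of_ne hea.symm
  have hne : x.Nonempty := ⟨a, hax⟩
  set M := x.max' hne
  have hMx : M ∈ x := x.max'_mem hne
  have haM : a ≤ M := x.le_max' a hax
  refine ⟨x.erase M, Q_adj_erase hMx, ?_⟩
  obtain hMa | hMa := haM.eq_or_lt
  · left
    refine eq_of_subset_of_card_le (fun b hb => ?_) (hcard' M hMx).ge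
    obtain ⟨hbM, hbx⟩ := mem_erase.mp hb
    have hba : b < a := hMa ▸ (x.le_max' b hbx).lt_of_ne hbM
    have hby : b ∈ y := by
      by_contra hby
      exact absurd (hmin b (mem_symmDiff.mpr (Or.inl ⟨hbx, hby⟩))) (not_le.mpr hba)
    exact mem_erase.mpr ⟨(hba.trans hae).ne, hby⟩
  · refine Or.inr (Or.inr ⟨hcard' M hMx, a, mem_erase.mpr ⟨hMa.ne, hax⟩,
      fun h => hay (mem_of_mem_erase h), fun b hb => ?_⟩)
    by_contra hab
    have hbxy : b ∉ x ∆ y := fun h => hab (hmin b h)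
    simp only [mem_symmDiff, mem_erase] at hb hbxy
    grind

lemma exists_Q_adj_wlexLe {x y c : Finset (Fin n)} (hxy : wlexLt x y) (hgap : x.card + 1 ≠ y.card)
    (hc : (Q n).Adj c y) : ∃ c', (Q n).Adj c' x ∧ (c' = c ∨ wlexLt c' c) := by
  by_cases hlt : x.card < c.card
  · exact exists_Q_adj_wlexLe_of_card_lt hlt
  obtain ⟨e, ⟨hey, rfl⟩ | ⟨hey, rfl⟩⟩ := Q_adj_iff.mp hc
  · rcases hxy with h | ⟨h, -⟩ <;> rw [card_insert_of_notMem hey] at hlt <;> omega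
  · have hcard_erase := card_erase_add_one hey
    rcases hxy with h | ⟨hcard, a, hax, hay, hmin⟩
    · omega
    · exact exists_Q_adj_wlexLe_erase hcard hax hay hmin hey

theorem IsInitSeg.nbhd_Q {P : ℕ → Prop} (hP : ∀ k, P (k + 1) ↔ ¬ P k) {C : Finset (Finset (Fin n))}
    (hC : IsInitSeg (fun x => P x.card) C) :
    IsInitSeg (fun x => ¬ P x.card) (nbhd (Q n) C) := by
  have hflip : ∀ {u v : Finset (Fin n)}, (Q n).Adj u v → (P u.card ↔ ¬ P v.card) := by
    intro u v h
    rcases card_eq_of_Q_adj h with h | h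
    · rw [h, hP]
    · rw [← h, hP, not_not]
  have hpar : ∀ z ∈ nbhd (Q n) C, ¬ P z.card := fun z hz => by
    obtain ⟨v, hv, hvz⟩ := mem_nbhd.mp hz
    exact (hflip hvz).mp (hC.1 v hv)
  refine ⟨hpar, fun x y hy hx hxy => ?_⟩
  obtain ⟨c, hcC, hcy⟩ := mem_nbhd.mp hy
  have hgap : x.card + 1 ≠ y.card := fun h => hpar y hy (h ▸ (hP _).mpr hx)
  obtain ⟨c', hc'x, hc'c⟩ := exists_Q_adj_wlexLe hxy hgap hcy
  have hc'C : c' ∈ C := by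
    rcases hc'c with rfl | hlt
    · exact hcC
    · exact hC.2 c' c hcC ((hflip hc'x).mpr hx) hlt
  exact mem_nbhd.mpr ⟨c', hc'C, hc'x⟩

end Hypercube

/-- The neighborhood of an initial segment of weightlex-even is an initial segment of
weightlex-odd, and symmetrically. -/
theorem nbhd_initSeg_wlex (n : ℕ) (C : Finset (Finset (Fin n))) :
    (IsInitSeg (fun x => Even x.card) C →
      IsInitSeg (fun x => Odd x.card) (nbhd (Q n) C)) ∧
    (IsInitSeg (fun x => Odd x.card) C →
      IsInitSeg (fun x => Even x.card) (nbhd (Q n) C)) := by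
  constructor
  · intro hC
    simpa only [Nat.not_even_iff_odd] using hC.nbhd_Q fun _ => Nat.even_add_one
  · intro hC
    simpa only [Nat.not_odd_iff_even] using hC.nbhd_Q fun _ => Nat.odd_add_one
end

section
/- In the hypercube Q^n, for every set A of even-weight vertices with |A| = k, if C is the initial segment of weightlex-even order of size k, then |N(A)| ≥ |N(C)|. -/
open Finset
open scoped Classical

variable {V : Type*} [Fintype V]

/-!
Compression proof, run inside an arbitrary subcube `P(X)` and parity class, with weightlex
encoded by a numerical `key`. Splitting a family `S` along a coordinate `i ∈ X` into `S₀`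
(members avoiding `i`) and `S₁` (members containing `i`, with `i` removed), which lie in opposite
parity classes of `P(X \ {i})`, gives `|N(S)| = |N(S₁) ∪ S₀| + |N(S₀) ∪ S₁|`. The neighbourhood of
an initial segment is an initial segment of the opposite class, and initial segments of one class
are nested; so, by induction on `|X|`, replacing both sections by initial segments does not
increase `|N(S)|`, and it strictly decreases the sum of keys unless `S` is already compressed in
direction `i`. A family compressed in every direction but not initial is `J ∪ {X \ x₀}`, where `J`
is an initial segment and `x₀` the element following it, while the initial segment of the same
size is `J ∪ {x₀}`: either `J = ∅` and both neighbourhoods have `|X|` elements, or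
`N(x₀) ⊆ N(J)`.
-/

open scoped symmDiff

namespace Harper

section InitSeg

variable {α : Type*} (f : α → ℕ) (U : Finset α)

def IsDownset (S : Finset α) : Prop := ∀ x ∈ S, ∀ y ∈ U, f y < f x → y ∈ S

def rank (x : α) : ℕ := #{y ∈ U | f y < f x}

def initSeg (m : ℕ) : Finset α := {x ∈ U | rank f U x < m}

variable {f U} {S T : Finset α} {m : ℕ} {x y : α}

lemma initSeg_subset : initSeg f U m ⊆ U := filter_subset _ _

lemma rank_lt_rank (hx : x ∈ U) (h : f x < f y) : rank f U x < rank f U y := by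
  refine card_lt_card ((ssubset_iff_of_subset fun z hz => ?_).2 ⟨x, ?_, ?_⟩)
  · rw [mem_filter] at hz ⊢
    exact ⟨hz.1, hz.2.trans h⟩
  · exact mem_filter.2 ⟨hx, h⟩
  · simp

lemma rank_lt_card (hx : x ∈ U) : rank f U x < #U :=
  card_lt_card ((ssubset_iff_of_subset (filter_subset _ _)).2 ⟨x, hx, by simp⟩)

lemma isDownset_initSeg : IsDownset f U (initSeg f U m) := by
  intro x hx y hy h
  rw [initSeg, mem_filter] at hx ⊢
  exact ⟨hy, (rank_lt_rank hy h).trans hx.2⟩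

lemma IsDownset.mem_of_le (hS : IsDownset f U S) (hf : Function.Injective f) (hx : x ∈ S)
    (hy : y ∈ U) (h : f y ≤ f x) : y ∈ S := by
  rcases h.lt_or_eq with h | h
  · exact hS x hx y hy h
  · rwa [hf h]

lemma rank_injOn (hf : Function.Injective f) : Set.InjOn (rank f U) U := by
  intro x hx y hy h
  rcases lt_trichotomy (f x) (f y) with hxy | hxy | hxy
  · exact absurd h (rank_lt_rank hx hxy).ne
  · exact hf hxy
  · exact absurd h (rank_lt_rank hy hxy).ne'

lemma card_initSeg (hf : Function.Injective f) (hm : m ≤ #U) : #(initSeg f U m) = m := by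
  have himage : U.image (rank f U) = range #U := by
    refine eq_of_subset_of_card_le (fun k hk => ?_) ?_
    · obtain ⟨x, hx, rfl⟩ := mem_image.1 hk
      exact mem_range.2 (rank_lt_card hx)
    · rw [card_range, card_image_of_injOn (rank_injOn hf)]
  have hseg : (initSeg f U m).image (rank f U) = range m := by
    have h := filter_image (s := U) (f := rank f U) (p := (· < m))
    rw [himage] at h
    rw [initSeg, ← h]
    ext k
    simp only [mem_filter, mem_range]
    omega
  rw [← card_image_of_injOn ((rank_injOn hf).mono (coe_subset.2 initSeg_subset)),
    hseg, card_range]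

lemma lt_of_mem_initSeg_of_notMem (hf : Function.Injective f) (hx : x ∈ initSeg f U m)
    (hy : y ∈ U) (hy' : y ∉ initSeg f U m) : f x < f y :=
  lt_of_not_ge fun h => hy' (isDownset_initSeg.mem_of_le hf hx hy h)

lemma IsDownset.subset_or_subset (hf : Function.Injective f) (hSU : S ⊆ U) (hTU : T ⊆ U)
    (hS : IsDownset f U S) (hT : IsDownset f U T) : S ⊆ T ∨ T ⊆ S := by
  by_contra h
  simp only [not_or, not_subset] at h
  obtain ⟨⟨x, hxS, hxT⟩, ⟨y, hyT, hyS⟩⟩ := h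
  rcases le_total (f x) (f y) with hxy | hxy
  · exact hxT (hT.mem_of_le hf hyT (hSU hxS) hxy)
  · exact hyS (hS.mem_of_le hf hxS (hTU hyT) hxy)

lemma IsDownset.eq_initSeg (hf : Function.Injective f) (hSU : S ⊆ U) (hS : IsDownset f U S) :
    S = initSeg f U #S := by
  have hcard := card_initSeg hf (card_le_card hSU)
  rcases hS.subset_or_subset hf hSU initSeg_subset isDownset_initSeg with h | h
  · exact eq_of_subset_of_card_le h hcard.le
  · exact (eq_of_subset_of_card_le h hcard.ge).symm

lemma IsDownset.card_union [DecidableEq α] (hf : Function.Injective f) (hSU : S ⊆ U) (hTU : T ⊆ U)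
    (hS : IsDownset f U S) (hT : IsDownset f U T) : #(S ∪ T) = max #S #T := by
  rcases hS.subset_or_subset hf hSU hTU hT with h | h
  · rw [union_eq_right.2 h, max_eq_right (card_le_card h)]
  · rw [union_eq_left.2 h, max_eq_left (card_le_card h)]

lemma initSeg_rank_add_one [DecidableEq α] (hf : Function.Injective f) (hx : x ∈ U) :
    initSeg f U (rank f U x + 1) = insert x {y ∈ U | f y < f x} := by
  have hsub : insert x {y ∈ U | f y < f x} ⊆ U := insert_subset hx (filter_subset _ _)
  have hdown : IsDownset f U (insert x {y ∈ U | f y < f x}) := fun z hz y hy hyz => by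
    refine mem_insert_of_mem (mem_filter.2 ⟨hy, hyz.trans_le ?_⟩)
    rcases mem_insert.1 hz with rfl | hz
    · exact le_rfl
    · exact (mem_filter.1 hz).2.le
  rw [hdown.eq_initSeg hf hsub, card_insert_of_notMem (by simp), rank]

/-- With `I` the initial segment, every element of `I \ T` precedes every element of `T \ I`,
and the two differences have the same size. -/
lemma sum_initSeg_lt (hf : Function.Injective f) {F : α → ℕ}
    (hF : ∀ x ∈ U, ∀ y ∈ U, f x < f y → F x < F y) (hTU : T ⊆ U) (hT : T ≠ initSeg f U #T) :
    ∑ x ∈ initSeg f U #T, F x < ∑ x ∈ T, F x := by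
  set I := initSeg f U #T
  have hcard : #I = #T := card_initSeg hf (card_le_card hTU)
  have hdiff : #(I \ T) = #(T \ I) := card_sdiff_comm hcard
  have hpos : 0 < #(T \ I) := card_pos.2 <| sdiff_nonempty.2 fun h =>
    hT (eq_of_subset_of_card_le h hcard.le)
  obtain ⟨a, ha, hamax⟩ := exists_max_image (I \ T) F (card_pos.1 (hdiff ▸ hpos))
  have hlow : ∑ x ∈ I \ T, F x ≤ #(I \ T) • F a := sum_le_card_nsmul _ _ _ hamax
  have hhigh : #(T \ I) • (F a + 1) ≤ ∑ x ∈ T \ I, F x := by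
    refine card_nsmul_le_sum _ _ _ fun b hb => ?_
    rw [mem_sdiff] at ha hb
    exact hF a (initSeg_subset ha.1) b (hTU hb.1)
      (lt_of_mem_initSeg_of_notMem hf ha.1 (hTU hb.1) hb.2)
  rw [← sum_inter_add_sum_sdiff I T, ← sum_inter_add_sum_sdiff T I,
    inter_comm]
  simp only [smul_eq_mul] at hlow hhigh
  nlinarith

lemma sum_initSeg_le (hf : Function.Injective f) {F : α → ℕ}
    (hF : ∀ x ∈ U, ∀ y ∈ U, f x < f y → F x < F y) (hTU : T ⊆ U) :
    ∑ x ∈ initSeg f U #T, F x ≤ ∑ x ∈ T, F x := by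
  by_cases hT : T = initSeg f U #T
  · rw [← hT]
  · exact (sum_initSeg_lt hf hF hTU hT).le

end InitSeg

variable {n : ℕ} {x y w w' z x₀ y₀ : Finset (Fin n)} {a d e : Fin n}

/-- Coordinate `0` is the most significant bit: among sets of equal size, a larger value means
earlier in weightlex order. -/
def binVal (x : Finset (Fin n)) : ℕ := ∑ i ∈ x, 2 ^ (i.rev : ℕ)

lemma sum_two_pow_rev_lt {K : ℕ} (h : ∀ j ∈ x, (j.rev : ℕ) < K) :
    ∑ j ∈ x, 2 ^ (j.rev : ℕ) < 2 ^ K := by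
  rw [← sum_image (f := (2 ^ ·)) fun i _ j _ hij => Fin.rev_injective (Fin.ext hij)]
  refine Nat.geomSum_lt le_rfl fun k hk => ?_
  obtain ⟨j, hj, rfl⟩ := mem_image.1 hk
  exact h j hj

lemma binVal_lt_two_pow (x : Finset (Fin n)) : binVal x < 2 ^ n :=
  sum_two_pow_rev_lt fun j _ => j.rev.isLt

lemma binVal_erase_add (hd : d ∈ x) : binVal (x.erase d) + 2 ^ (d.rev : ℕ) = binVal x :=
  sum_erase_add _ _ hd

lemma binVal_insert (hd : d ∉ x) : binVal (insert d x) = 2 ^ (d.rev : ℕ) + binVal x :=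
  sum_insert hd

lemma binVal_singleton (a : Fin n) : binVal ({a} : Finset (Fin n)) = 2 ^ (a.rev : ℕ) := by
  simp [binVal]

lemma binVal_lt_of_forall_lt (hax : a ∈ x) (hay : a ∉ y) (h : ∀ j ∈ y, j ∉ x → a < j) :
    binVal y < binVal x := by
  have hsmall : ∑ j ∈ y \ x, 2 ^ (j.rev : ℕ) < 2 ^ (a.rev : ℕ) :=
    sum_two_pow_rev_lt fun j hj =>
      Fin.rev_lt_rev.2 (h j (mem_sdiff.1 hj).1 (mem_sdiff.1 hj).2)
  have hbig : 2 ^ (a.rev : ℕ) ≤ ∑ j ∈ x \ y, 2 ^ (j.rev : ℕ) :=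
    single_le_sum (f := fun j => 2 ^ (j.rev : ℕ)) (fun _ _ => Nat.zero_le _)
      (mem_sdiff.2 ⟨hax, hay⟩)
  have hy := sum_inter_add_sum_sdiff y x fun j => 2 ^ (j.rev : ℕ)
  have hx := sum_inter_add_sum_sdiff x y fun j => 2 ^ (j.rev : ℕ)
  rw [inter_comm] at hy
  simp only [binVal]
  omega

lemma binVal_lt_of_isLeast (hax : a ∈ x) (hay : a ∉ y) (ha : ∀ b ∈ x ∆ y, a ≤ b) :
    binVal y < binVal x :=
  binVal_lt_of_forall_lt hax hay fun j hjy hjx =>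
    (ha j (mem_symmDiff.2 (Or.inr ⟨hjy, hjx⟩))).lt_of_ne (by rintro rfl; exact hay hjy)

lemma exists_isLeast_symmDiff (h : x ≠ y) : ∃ a ∈ x ∆ y, ∀ b ∈ x ∆ y, a ≤ b :=
  ⟨_, min'_mem _ (symmDiff_nonempty.2 h), fun b hb => min'_le _ b hb⟩

lemma binVal_injective : Function.Injective (binVal (n := n)) := by
  intro x y hxy
  by_contra hne
  obtain ⟨a, hmem, ha⟩ := exists_isLeast_symmDiff hne
  rcases mem_symmDiff.1 hmem with ⟨hax, hay⟩ | ⟨hay, hax⟩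
  · exact (binVal_lt_of_isLeast hax hay ha).ne' hxy
  · exact (binVal_lt_of_isLeast hay hax (symmDiff_comm x y ▸ ha)).ne hxy

lemma exists_isLeast_of_binVal_lt (h : binVal x < binVal y) :
    ∃ a ∈ y, a ∉ x ∧ ∀ b ∈ y ∆ x, a ≤ b := by
  obtain ⟨a, hmem, ha⟩ := exists_isLeast_symmDiff (y := x) (fun hyx => h.ne' (congrArg _ hyx))
  rcases mem_symmDiff.1 hmem with ⟨hay, hax⟩ | ⟨hax, hay⟩
  · exact ⟨a, hay, hax, ha⟩
  · exact absurd h (binVal_lt_of_isLeast hax hay (symmDiff_comm x y ▸ ha)).not_gt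

lemma mul_add_lt_mul_add_iff {N a b r s : ℕ} (hr : r < N) (hs : s < N) :
    a * N + r < b * N + s ↔ a < b ∨ a = b ∧ r < s := by
  constructor
  · intro h
    rcases lt_trichotomy a b with hab | rfl | hab
    · exact Or.inl hab
    · exact Or.inr ⟨rfl, by omega⟩
    · have : (b + 1) * N ≤ a * N := Nat.mul_le_mul_right _ hab
      rw [add_mul, one_mul] at this
      omega
  · rintro (hab | ⟨rfl, hrs⟩)
    · have : (a + 1) * N ≤ b * N := Nat.mul_le_mul_right _ hab
      rw [add_mul, one_mul] at this
      omega
    · omega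

/-- Weightlex order as a number: size first, then binary value reversed (no truncation in the
subtraction, as `binVal x < 2 ^ n`). -/
def key (x : Finset (Fin n)) : ℕ := #x * 2 ^ n + (2 ^ n - 1 - binVal x)

lemma key_lt_key_iff :
    key x < key y ↔ #x < #y ∨ #x = #y ∧ binVal y < binVal x := by
  have hx := binVal_lt_two_pow x
  have hy := binVal_lt_two_pow y
  rw [key, key, mul_add_lt_mul_add_iff (by omega) (by omega)]
  omega

lemma key_injective : Function.Injective (key (n := n)) := by
  intro x y h
  have h₁ := mt key_lt_key_iff.2 h.not_lt
  have h₂ := mt key_lt_key_iff.2 h.not_gt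
  exact binVal_injective (by omega)

lemma key_le_key_iff :
    key x ≤ key y ↔ #x < #y ∨ #x = #y ∧ binVal y ≤ binVal x := by
  rw [← not_lt, key_lt_key_iff]
  omega

lemma key_lt_key_of_card_lt (h : #x < #y) : key x < key y :=
  key_lt_key_iff.2 (Or.inl h)

lemma card_le_card_of_key_lt (h : key x < key y) : #x ≤ #y := by
  rcases key_lt_key_iff.1 h with h | h <;> omega

lemma key_le_key_of_binVal_le (hc : #x = #y) (hb : binVal y ≤ binVal x) :
    key x ≤ key y := by
  rcases hb.lt_or_eq with hb | hb
  · exact (key_lt_key_iff.2 (Or.inr ⟨hc, hb⟩)).le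
  · rw [binVal_injective hb]

lemma wlexLt_of_key_lt (h : key x < key y) : wlexLt x y := by
  rcases key_lt_key_iff.1 h with h | ⟨hc, hb⟩
  · exact Or.inl h
  · exact Or.inr ⟨hc, exists_isLeast_of_binVal_lt hb⟩

lemma key_insert_lt_key_insert_iff (hx : a ∉ x) (hy : a ∉ y) :
    key (insert a x) < key (insert a y) ↔ key x < key y := by
  rw [key_lt_key_iff, key_lt_key_iff, card_insert_of_notMem hx,
    card_insert_of_notMem hy, binVal_insert hx, binVal_insert hy]
  omega

lemma key_erase_lt_key_erase_iff (hx : a ∈ x) (hy : a ∈ y) :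
    key (x.erase a) < key (y.erase a) ↔ key x < key y := by
  conv_rhs => rw [← insert_erase hx, ← insert_erase hy]
  exact (key_insert_lt_key_insert_iff (notMem_erase a x) (notMem_erase a y)).symm

lemma card_insert_erase (hd : d ∉ x) (he : e ∈ x) : #(insert d (x.erase e)) = #x := by
  rw [card_insert_of_notMem fun h => hd (mem_of_mem_erase h), card_erase_add_one he]

lemma binVal_insert_erase_add (hd : d ∉ x) (he : e ∈ x) :
    binVal (insert d (x.erase e)) + 2 ^ (e.rev : ℕ) = binVal x + 2 ^ (d.rev : ℕ) := by
  rw [binVal_insert fun h => hd (mem_of_mem_erase h), ← binVal_erase_add he]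
  omega

lemma key_insert_erase_lt_iff (hd : d ∉ x) (he : e ∈ x) :
    key (insert d (x.erase e)) < key x ↔ d < e := by
  have := binVal_insert_erase_add hd he
  have hpow : 2 ^ (e.rev : ℕ) < 2 ^ (d.rev : ℕ) ↔ d < e :=
    (Nat.pow_lt_pow_iff_right (by norm_num)).trans Fin.rev_lt_rev
  rw [key_lt_key_iff, card_insert_erase hd he, ← hpow]
  omega

lemma key_lt_key_insert_erase_iff (hd : d ∉ x) (he : e ∈ x) :
    key x < key (insert d (x.erase e)) ↔ e < d := by
  have := binVal_insert_erase_add hd he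
  have hpow : 2 ^ (d.rev : ℕ) < 2 ^ (e.rev : ℕ) ↔ e < d :=
    (Nat.pow_lt_pow_iff_right (by norm_num)).trans Fin.rev_lt_rev
  rw [key_lt_key_iff, card_insert_erase hd he, ← hpow]
  omega

lemma symmDiff_singleton_of_mem (hd : d ∈ x) : x ∆ {d} = x.erase d := by
  ext j
  by_cases hj : j = d <;> simp [mem_symmDiff, hj, hd]

lemma symmDiff_singleton_of_notMem (hd : d ∉ x) : x ∆ {d} = insert d x := by
  ext j
  by_cases hj : j = d <;> simp [mem_symmDiff, hj, hd]

lemma insert_symmDiff_of_notMem (hw : a ∉ w) : insert a x ∆ w = insert a (x ∆ w) := by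
  ext j
  by_cases hj : j = a
  · subst hj
    simp [mem_symmDiff, hw]
  · simp [mem_symmDiff, hj]

lemma insert_symmDiff_insert (hx : a ∉ x) (hw : a ∉ w) : insert a x ∆ insert a w = x ∆ w := by
  ext j
  by_cases hj : j = a
  · subst hj
    simp [mem_symmDiff, hx, hw]
  · simp [mem_symmDiff, hj]

lemma Q_adj_iff : (Q n).Adj x y ↔ #(x ∆ y) = 1 := Iff.rfl

lemma Q_adj_iff_exists : (Q n).Adj x y ↔ ∃ d, y = x ∆ {d} := by
  rw [Q_adj_iff, card_eq_one]
  refine exists_congr fun d => ⟨fun h => ?_, fun h => ?_⟩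
  · rw [← h, symmDiff_symmDiff_cancel_left]
  · rw [h, symmDiff_symmDiff_cancel_left]

lemma Q_adj_erase (hd : d ∈ x) : (Q n).Adj x (x.erase d) :=
  Q_adj_iff_exists.2 ⟨d, (symmDiff_singleton_of_mem hd).symm⟩

lemma Q_adj_insert (hd : d ∉ x) : (Q n).Adj x (insert d x) :=
  Q_adj_iff_exists.2 ⟨d, (symmDiff_singleton_of_notMem hd).symm⟩

lemma Q_adj_iff_erase_or_insert :
    (Q n).Adj x y ↔ (∃ d ∈ x, y = x.erase d) ∨ ∃ d ∉ x, y = insert d x := by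
  refine ⟨fun h => ?_, ?_⟩
  · obtain ⟨d, rfl⟩ := Q_adj_iff_exists.1 h
    by_cases hd : d ∈ x
    · exact Or.inl ⟨d, hd, symmDiff_singleton_of_mem hd⟩
    · exact Or.inr ⟨d, hd, symmDiff_singleton_of_notMem hd⟩
  · rintro (⟨d, hd, rfl⟩ | ⟨d, hd, rfl⟩)
    · exact Q_adj_erase hd
    · exact Q_adj_insert hd

lemma card_eq_or_of_Q_adj (h : (Q n).Adj x y) : #y + 1 = #x ∨ #y = #x + 1 := by
  rcases Q_adj_iff_erase_or_insert.1 h with ⟨d, hd, rfl⟩ | ⟨d, hd, rfl⟩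
  · exact Or.inl (card_erase_add_one hd)
  · exact Or.inr (card_insert_of_notMem hd)

lemma Q_adj_insert_left_iff (hx : a ∉ x) (hw : a ∉ w) : (Q n).Adj (insert a x) w ↔ x = w := by
  rw [Q_adj_iff, insert_symmDiff_of_notMem hw, card_insert_of_notMem
    (by simp [mem_symmDiff, hx, hw]), Nat.add_eq_right, card_eq_zero,
    symmDiff_eq_empty]

lemma Q_adj_insert_insert_iff (hx : a ∉ x) (hw : a ∉ w) :
    (Q n).Adj (insert a x) (insert a w) ↔ (Q n).Adj x w := by
  rw [Q_adj_iff, Q_adj_iff, insert_symmDiff_insert hx hw]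

variable {X : Finset (Fin n)} {p : ℕ} {S T : Finset (Finset (Fin n))}

noncomputable def parityClass (X : Finset (Fin n)) (p : ℕ) : Finset (Finset (Fin n)) :=
  {x ∈ X.powerset | #x % 2 = p % 2}

lemma mem_parityClass : x ∈ parityClass X p ↔ x ⊆ X ∧ #x % 2 = p % 2 := by
  simp [parityClass]

lemma parityClass_succ_succ : parityClass X (p + 1 + 1) = parityClass X p := by
  ext x
  rw [mem_parityClass, mem_parityClass]
  exact and_congr_right fun _ => by omega

noncomputable def nbhdIn (X : Finset (Fin n)) (S : Finset (Finset (Fin n))) :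
    Finset (Finset (Fin n)) :=
  {w ∈ X.powerset | ∃ x ∈ S, (Q n).Adj x w}

lemma mem_nbhdIn : w ∈ nbhdIn X S ↔ w ⊆ X ∧ ∃ x ∈ S, (Q n).Adj x w := by
  simp [nbhdIn]

lemma nbhdIn_empty : nbhdIn X ∅ = ∅ := by
  simp [nbhdIn]

lemma nbhd_eq_nbhdIn_univ : nbhd (Q n) S = nbhdIn univ S := by
  ext w
  simp [nbhd, mem_nbhdIn]

lemma nbhdIn_insert : nbhdIn X (insert x S) = nbhdIn X {x} ∪ nbhdIn X S := by
  ext w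
  simp only [mem_nbhdIn, mem_union, mem_insert, mem_singleton,
    exists_eq_or_imp, exists_eq_left]
  tauto

lemma nbhdIn_subset_parityClass (hS : S ⊆ parityClass X p) :
    nbhdIn X S ⊆ parityClass X (p + 1) := by
  intro w hw
  obtain ⟨hwX, x, hx, hadj⟩ := mem_nbhdIn.1 hw
  have hxp := (mem_parityClass.1 (hS hx)).2
  refine mem_parityClass.2 ⟨hwX, ?_⟩
  rcases card_eq_or_of_Q_adj hadj with h | h <;> omega

lemma card_nbhdIn_singleton (hx : x ⊆ X) : #(nbhdIn X {x}) = #X := by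
  have hnbhd : nbhdIn X {x} = X.image fun d => x ∆ {d} := by
    ext w
    simp only [mem_nbhdIn, mem_singleton, exists_eq_left, Q_adj_iff_exists,
      mem_image]
    constructor
    · rintro ⟨hwX, d, rfl⟩
      refine ⟨d, ?_, rfl⟩
      by_cases hd : d ∈ x
      · exact hx hd
      · exact hwX (by simp [mem_symmDiff, hd])
    · rintro ⟨d, hd, rfl⟩
      refine ⟨fun j hj => ?_, d, rfl⟩
      rcases mem_symmDiff.1 hj with ⟨hj, -⟩ | ⟨hj, -⟩
      · exact hx hj
      · rwa [mem_singleton.1 hj]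
  rw [hnbhd, card_image_of_injective _ fun d e h => by
    simpa using symmDiff_right_injective x h]

lemma key_singleton_min'_le (hX : X.Nonempty) (hyX : y ⊆ X) (hy : y.Nonempty) :
    key {X.min' hX} ≤ key y := by
  rcases (Nat.one_le_iff_ne_zero.2 (card_ne_zero.2 hy)).lt_or_eq with hy1 | hy1
  · exact (key_lt_key_of_card_lt (by simpa using hy1)).le
  · obtain ⟨e, rfl⟩ := card_eq_one.1 hy1.symm
    refine key_le_key_of_binVal_le (by simp) ?_
    rw [binVal_singleton, binVal_singleton]
    exact Nat.pow_le_pow_right (by norm_num)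
      (Fin.rev_le_rev.2 (X.min'_le e (hyX (mem_singleton_self e))))

lemma binVal_erase_le_erase_max' (hw : w.Nonempty) (hd : d ∈ w) :
    binVal (w.erase d) ≤ binVal (w.erase (w.max' hw)) := by
  have h₁ := binVal_erase_add hd
  have h₂ := binVal_erase_add (w.max'_mem hw)
  have : 2 ^ ((w.max' hw).rev : ℕ) ≤ 2 ^ (d.rev : ℕ) :=
    Nat.pow_le_pow_right (by norm_num) (Fin.rev_le_rev.2 (w.le_max' d hd))
  omega

/-- The least element `a` of `w' ∆ w` lies in `w'`, and a counting argument puts it below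
`max w`; so either `a` survives in `w' \ {max w'}`, or `a = max w'` and both deletions leave the
common part below `a`. -/
lemma binVal_erase_max'_le (hw : w.Nonempty) (hw' : w'.Nonempty) (hc : #w = #w')
    (hb : binVal w ≤ binVal w') :
    binVal (w.erase (w.max' hw)) ≤ binVal (w'.erase (w'.max' hw')) := by
  rcases hb.lt_or_eq with hb | hb
  swap
  · obtain rfl := binVal_injective hb
    rfl
  obtain ⟨a, haw', haw, ha⟩ := exists_isLeast_of_binVal_lt hb
  have hagree : ∀ j < a, j ∈ w ↔ j ∈ w' := fun j hj => by
    by_contra h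
    exact (ha j (mem_symmDiff.2 (by tauto))).not_gt hj
  have haM : a < w.max' hw := by
    by_contra! h
    have hsub : w ⊆ w'.erase a := fun j hj =>
      have hja : j < a := ((w.le_max' j hj).trans h).lt_of_ne (ne_of_mem_of_not_mem hj haw)
      mem_erase.2 ⟨hja.ne, (hagree j hja).1 hj⟩
    have := card_le_card hsub
    rw [card_erase_of_mem haw'] at this
    have := card_pos.2 hw
    omega
  rcases (w'.le_max' a haw').lt_or_eq with haM' | haM'
  · refine (binVal_lt_of_forall_lt (mem_erase.2 ⟨haM'.ne, haw'⟩)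
      (fun h => haw (mem_of_mem_erase h)) fun j hj hj' => ?_).le
    obtain ⟨hjM, hjw⟩ := mem_erase.1 hj
    refine lt_of_not_ge fun hja => hja.lt_or_eq.elim (fun hja => ?_) fun h => haw (h ▸ hjw)
    have hjM' : j = w'.max' hw' := by
      by_contra hne
      exact hj' (mem_erase.2 ⟨hne, (hagree j hja).1 hjw⟩)
    exact (haM'.trans (hjM' ▸ hja)).false
  · have hsub : w'.erase (w'.max' hw') ⊆ w.erase (w.max' hw) := fun j hj => by
      obtain ⟨hjM', hjw'⟩ := mem_erase.1 hj
      have hja : j < a := haM' ▸ (w'.le_max' j hjw').lt_of_ne hjM'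
      exact mem_erase.2 ⟨(hja.trans haM).ne, (hagree j hja).2 hjw'⟩
    rw [eq_of_subset_of_card_le hsub (by
      rw [card_erase_of_mem (w.max'_mem hw), card_erase_of_mem (w'.max'_mem hw'),
        hc])]

lemma key_erase_max'_le (hw' : w'.Nonempty) (hk : key w' ≤ key w) (hd : d ∈ w) :
    key (w'.erase (w'.max' hw')) ≤ key (w.erase d) := by
  have hw : w.Nonempty := ⟨d, hd⟩
  have hcard := card_erase_add_one (w'.max'_mem hw')
  have hcard' := card_erase_add_one hd
  rcases key_le_key_iff.1 hk with hlt | ⟨hc, hb⟩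
  · exact (key_lt_key_of_card_lt (by omega)).le
  · exact key_le_key_of_binVal_le (by omega)
      ((binVal_erase_le_erase_max' hw hd).trans (binVal_erase_max'_le hw hw' hc.symm hb))

/-- The witness is the earliest neighbour of `w'`: `{min X}` if `w' = ∅`, and otherwise `w'` with
its largest element deleted. -/
lemma exists_Q_adj_key_le (hw'X : w' ⊆ X) (hpar : #w % 2 = #w' % 2) (hk : key w' < key w)
    (hyX : y ⊆ X) (hadj : (Q n).Adj w y) : ∃ y' ⊆ X, (Q n).Adj w' y' ∧ key y' ≤ key y := by
  rcases w'.eq_empty_or_nonempty with rfl | hw'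
  · have hw : #w ≠ 0 := fun h => hk.ne (by rw [card_eq_zero.1 h])
    have hy : y.Nonempty := by
      rw [← card_pos]
      rcases card_eq_or_of_Q_adj hadj with h | h <;> simp at hpar <;> omega
    have hX : X.Nonempty := hy.mono hyX
    refine ⟨{X.min' hX}, singleton_subset_iff.2 (X.min'_mem hX), ?_,
      key_singleton_min'_le hX hyX hy⟩
    simpa using Q_adj_insert (notMem_empty (X.min' hX))
  · refine ⟨w'.erase (w'.max' hw'), (erase_subset _ _).trans hw'X,
      Q_adj_erase (w'.max'_mem hw'), ?_⟩
    rcases Q_adj_iff_erase_or_insert.1 hadj with ⟨d, hd, rfl⟩ | ⟨d, hd, rfl⟩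
    · exact key_erase_max'_le hw' hk.le hd
    · refine (key_lt_key_of_card_lt ?_).le
      have := card_le_card_of_key_lt hk
      rw [card_insert_of_notMem hd, card_erase_of_mem (w'.max'_mem hw')]
      omega

lemma isDownset_nbhdIn (hSU : S ⊆ parityClass X p) (hS : IsDownset key (parityClass X p) S) :
    IsDownset key (parityClass X (p + 1)) (nbhdIn X S) := by
  intro w hw w' hw' hk
  obtain ⟨hwX, x, hx, hadj⟩ := mem_nbhdIn.1 hw
  have hwp := (mem_parityClass.1 (nbhdIn_subset_parityClass hSU hw)).2
  obtain ⟨hw'X, hw'p⟩ := mem_parityClass.1 hw'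
  obtain ⟨hxX, hxp⟩ := mem_parityClass.1 (hSU hx)
  obtain ⟨y, hyX, hadj', hy⟩ := exists_Q_adj_key_le hw'X (by omega) hk hxX hadj.symm
  have hyp : y ∈ parityClass X p :=
    mem_parityClass.2 ⟨hyX, by rcases card_eq_or_of_Q_adj hadj' with h | h <;> omega⟩
  exact mem_nbhdIn.2 ⟨hw'X, y, hS.mem_of_le key_injective hx hyp hy, hadj'.symm⟩

variable {i : Fin n}

lemma nonMemberSubfamily_nbhdIn (hT : ∀ x ∈ T, x ⊆ X) :
    (nbhdIn X T).nonMemberSubfamily i =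
      nbhdIn (X.erase i) (T.nonMemberSubfamily i) ∪ T.memberSubfamily i := by
  ext w
  simp only [mem_nonMemberSubfamily, mem_memberSubfamily, mem_union,
    mem_nbhdIn, subset_erase]
  constructor
  · rintro ⟨⟨hwX, x, hx, hadj⟩, hiw⟩
    by_cases hix : i ∈ x
    · rw [← insert_erase hix, Q_adj_insert_left_iff (notMem_erase i x) hiw] at hadj
      exact Or.inr ⟨by rwa [← hadj, insert_erase hix], hiw⟩
    · exact Or.inl ⟨⟨hwX, hiw⟩, x, ⟨hx, hix⟩, hadj⟩
  · rintro (⟨⟨hwX, hiw⟩, x, ⟨hx, -⟩, hadj⟩ | ⟨hw, hiw⟩)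
    · exact ⟨⟨hwX, x, hx, hadj⟩, hiw⟩
    · exact ⟨⟨(subset_insert i w).trans (hT _ hw), _, hw,
        (Q_adj_insert_left_iff hiw hiw).2 rfl⟩, hiw⟩

lemma memberSubfamily_nbhdIn (hi : i ∈ X) (hT : ∀ x ∈ T, x ⊆ X) :
    (nbhdIn X T).memberSubfamily i =
      nbhdIn (X.erase i) (T.memberSubfamily i) ∪ T.nonMemberSubfamily i := by
  ext w
  simp only [mem_nonMemberSubfamily, mem_memberSubfamily, mem_union,
    mem_nbhdIn, subset_erase, insert_subset_iff]
  constructor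
  · rintro ⟨⟨⟨-, hwX⟩, x, hx, hadj⟩, hiw⟩
    by_cases hix : i ∈ x
    · rw [← insert_erase hix,
        Q_adj_insert_insert_iff (notMem_erase i x) hiw] at hadj
      exact Or.inl ⟨⟨hwX, hiw⟩, x.erase i, ⟨by rwa [insert_erase hix],
        notMem_erase i x⟩, hadj⟩
    · rw [(Q_adj_insert_left_iff hiw hix).1 hadj.symm]
      exact Or.inr ⟨hx, hix⟩
  · rintro (⟨⟨hwX, hiw⟩, z, ⟨hz, hiz⟩, hadj⟩ | ⟨hw, hiw⟩)
    · exact ⟨⟨⟨hi, hwX⟩, _, hz, (Q_adj_insert_insert_iff hiz hiw).2 hadj⟩, hiw⟩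
    · exact ⟨⟨⟨hi, hT w hw⟩, w, hw, Q_adj_insert hiw⟩, hiw⟩

lemma card_nbhdIn_eq (hi : i ∈ X) (hT : ∀ x ∈ T, x ⊆ X) :
    #(nbhdIn X T) = #(nbhdIn (X.erase i) (T.memberSubfamily i) ∪ T.nonMemberSubfamily i) +
      #(nbhdIn (X.erase i) (T.nonMemberSubfamily i) ∪ T.memberSubfamily i) := by
  rw [← card_memberSubfamily_add_card_nonMemberSubfamily i, memberSubfamily_nbhdIn hi hT,
    nonMemberSubfamily_nbhdIn hT]

lemma sum_eq_sum_nonMemberSubfamily_add {α : Type*} [DecidableEq α] (g : Finset α → ℕ) (a : α)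
    (T : Finset (Finset α)) : ∑ x ∈ T, g x =
      ∑ x ∈ T.nonMemberSubfamily a, g x + ∑ x ∈ T.memberSubfamily a, g (insert a x) := by
  have hinj : Set.InjOn (insert a) (T.memberSubfamily a : Set (Finset α)) := fun x hx y hy h => by
    rw [mem_coe, mem_memberSubfamily] at hx hy
    rw [← erase_insert hx.2, h, erase_insert hy.2]
  rw [← sum_image hinj, image_insert_memberSubfamily, nonMemberSubfamily,
    add_comm, sum_filter_add_sum_filter_not]

lemma notMem_of_mem_parityClass_erase (h : x ∈ parityClass (X.erase i) p) : i ∉ x :=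
  fun hi => notMem_erase i X ((mem_parityClass.1 h).1 hi)

lemma nonMemberSubfamily_subset_parityClass (hS : S ⊆ parityClass X p) :
    S.nonMemberSubfamily i ⊆ parityClass (X.erase i) p := fun x hx => by
  obtain ⟨hx, hix⟩ := mem_nonMemberSubfamily.1 hx
  obtain ⟨hxX, hxp⟩ := mem_parityClass.1 (hS hx)
  exact mem_parityClass.2 ⟨subset_erase.2 ⟨hxX, hix⟩, hxp⟩

lemma memberSubfamily_subset_parityClass (hS : S ⊆ parityClass X p) :
    S.memberSubfamily i ⊆ parityClass (X.erase i) (p + 1) := fun x hx => by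
  obtain ⟨hx, hix⟩ := mem_memberSubfamily.1 hx
  obtain ⟨hxX, hxp⟩ := mem_parityClass.1 (hS hx)
  rw [card_insert_of_notMem hix] at hxp
  exact mem_parityClass.2 ⟨subset_erase.2 ⟨(insert_subset_iff.1 hxX).2, hix⟩,
    by omega⟩

def IsCompressedAt (X : Finset (Fin n)) (p : ℕ) (i : Fin n) (S : Finset (Finset (Fin n))) :
    Prop :=
  IsDownset key (parityClass (X.erase i) p) (S.nonMemberSubfamily i) ∧
    IsDownset key (parityClass (X.erase i) (p + 1)) (S.memberSubfamily i)

noncomputable def compress (X : Finset (Fin n)) (p : ℕ) (i : Fin n)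
    (S : Finset (Finset (Fin n))) : Finset (Finset (Fin n)) :=
  initSeg key (parityClass (X.erase i) p) #(S.nonMemberSubfamily i) ∪
    (initSeg key (parityClass (X.erase i) (p + 1)) #(S.memberSubfamily i)).image (insert i)

lemma nonMemberSubfamily_compress : (compress X p i S).nonMemberSubfamily i =
    initSeg key (parityClass (X.erase i) p) #(S.nonMemberSubfamily i) := by
  rw [compress, nonMemberSubfamily_union, nonMemberSubfamily_image_insert,
    union_empty, nonMemberSubfamily, filter_true_of_mem fun x hx =>
      notMem_of_mem_parityClass_erase (initSeg_subset hx)]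

lemma memberSubfamily_compress : (compress X p i S).memberSubfamily i =
    initSeg key (parityClass (X.erase i) (p + 1)) #(S.memberSubfamily i) := by
  have hempty :
      (initSeg key (parityClass (X.erase i) p) #(S.nonMemberSubfamily i)).memberSubfamily i = ∅ :=
    eq_empty_of_forall_notMem fun x hx =>
      notMem_of_mem_parityClass_erase (initSeg_subset (mem_memberSubfamily.1 hx).1)
        (mem_insert_self i x)
  rw [compress, memberSubfamily_union, hempty, empty_union,
    memberSubfamily_image_insert fun x hx =>
      notMem_of_mem_parityClass_erase (initSeg_subset hx)]

lemma compress_subset (hi : i ∈ X) : compress X p i S ⊆ parityClass X p := by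
  intro x hx
  rcases mem_union.1 hx with hx | hx
  · obtain ⟨hxX, hxp⟩ := mem_parityClass.1 (initSeg_subset hx)
    exact mem_parityClass.2 ⟨hxX.trans (erase_subset i X), hxp⟩
  · obtain ⟨z, hz, rfl⟩ := mem_image.1 hx
    obtain ⟨hzX, hzp⟩ := mem_parityClass.1 (initSeg_subset hz)
    rw [mem_parityClass, card_insert_of_notMem
      (notMem_of_mem_parityClass_erase (initSeg_subset hz))]
    exact ⟨insert_subset hi (hzX.trans (erase_subset i X)), by omega⟩

lemma card_compress (hS : S ⊆ parityClass X p) : #(compress X p i S) = #S := by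
  rw [← card_memberSubfamily_add_card_nonMemberSubfamily i, memberSubfamily_compress,
    nonMemberSubfamily_compress,
    card_initSeg key_injective (card_le_card (memberSubfamily_subset_parityClass hS)),
    card_initSeg key_injective (card_le_card (nonMemberSubfamily_subset_parityClass hS)),
    card_memberSubfamily_add_card_nonMemberSubfamily]

lemma sum_key_compress_lt (hS : S ⊆ parityClass X p) (hSi : ¬IsCompressedAt X p i S) :
    ∑ x ∈ compress X p i S, key x < ∑ x ∈ S, key x := by
  have hS₀ := nonMemberSubfamily_subset_parityClass (i := i) hS
  have hS₁ := memberSubfamily_subset_parityClass (i := i) hS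
  have hF₀ : ∀ x ∈ parityClass (X.erase i) p, ∀ y ∈ parityClass (X.erase i) p,
      key x < key y → key x < key y := fun _ _ _ _ h => h
  have hF₁ : ∀ x ∈ parityClass (X.erase i) (p + 1), ∀ y ∈ parityClass (X.erase i) (p + 1),
      key x < key y → key (insert i x) < key (insert i y) := fun x hx y hy =>
    (key_insert_lt_key_insert_iff (notMem_of_mem_parityClass_erase hx)
      (notMem_of_mem_parityClass_erase hy)).2
  rw [sum_eq_sum_nonMemberSubfamily_add key i, sum_eq_sum_nonMemberSubfamily_add key i S,
    nonMemberSubfamily_compress, memberSubfamily_compress]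
  rcases not_and_or.1 hSi with h | h
  · exact add_lt_add_of_lt_of_le
      (sum_initSeg_lt key_injective hF₀ hS₀ fun h' => h (h' ▸ isDownset_initSeg))
      (sum_initSeg_le key_injective hF₁ hS₁)
  · exact add_lt_add_of_le_of_lt (sum_initSeg_le key_injective hF₀ hS₀)
      (sum_initSeg_lt key_injective hF₁ hS₁ fun h' => h (h' ▸ isDownset_initSeg))

def InitSegMinNbhd (X : Finset (Fin n)) : Prop :=
  ∀ p (S : Finset (Finset (Fin n))), S ⊆ parityClass X p →
    #(nbhdIn X (initSeg key (parityClass X p) #S)) ≤ #(nbhdIn X S)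

/-- On the left, `N(I_A)` and `I_B` are initial segments of the same class, hence nested. -/
lemma card_nbhdIn_initSeg_union_le {Y : Finset (Fin n)} {A B : Finset (Finset (Fin n))}
    (ih : InitSegMinNbhd Y) (hA : A ⊆ parityClass Y p) (hB : B ⊆ parityClass Y (p + 1)) :
    #(nbhdIn Y (initSeg key (parityClass Y p) #A) ∪ initSeg key (parityClass Y (p + 1)) #B) ≤
      #(nbhdIn Y A ∪ B) := by
  rw [IsDownset.card_union key_injective (nbhdIn_subset_parityClass initSeg_subset)
    initSeg_subset (isDownset_nbhdIn initSeg_subset isDownset_initSeg) isDownset_initSeg,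
    card_initSeg key_injective (card_le_card hB)]
  exact max_le ((ih p A hA).trans (card_le_card subset_union_left))
    (card_le_card subset_union_right)

lemma card_nbhdIn_compress_le (hi : i ∈ X) (hS : S ⊆ parityClass X p)
    (ih : InitSegMinNbhd (X.erase i)) :
    #(nbhdIn X (compress X p i S)) ≤ #(nbhdIn X S) := by
  have hS₀ := nonMemberSubfamily_subset_parityClass (i := i) hS
  have hS₁ := memberSubfamily_subset_parityClass (i := i) hS
  have hS₀' : S.nonMemberSubfamily i ⊆ parityClass (X.erase i) (p + 1 + 1) := by
    rwa [parityClass_succ_succ]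
  have h₁ := card_nbhdIn_initSeg_union_le ih hS₁ hS₀'
  rw [parityClass_succ_succ] at h₁
  rw [card_nbhdIn_eq hi fun x hx => (mem_parityClass.1 (compress_subset hi hx)).1,
    card_nbhdIn_eq hi fun x hx => (mem_parityClass.1 (hS hx)).1,
    memberSubfamily_compress, nonMemberSubfamily_compress]
  exact add_le_add h₁ (card_nbhdIn_initSeg_union_le ih hS₀ hS₁)

lemma key_lt_key_of_min'_mem (hX : X.Nonempty) (hyX : y ⊆ X) (hc : #x = #y)
    (hx : X.min' hX ∈ x) (hy : X.min' hX ∉ y) : key x < key y :=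
  key_lt_key_iff.2 <| Or.inr ⟨hc, binVal_lt_of_forall_lt hx hy fun j hj _ =>
    (X.min'_le j (hyX hj)).lt_of_ne fun h => hy (h ▸ hj)⟩

lemma key_singleton_min'_lt (hX : X.Nonempty) (hx : x ∈ parityClass X p) (hx1 : #x = 1)
    (hz : z ∈ parityClass X p) (hzx : key z < key x) : key {X.min' hX} < key x := by
  obtain ⟨hzX, hzp⟩ := mem_parityClass.1 hz
  have hxp := (mem_parityClass.1 hx).2
  have hzne : z.Nonempty := card_pos.1 (by omega)
  exact (key_singleton_min'_le hX hzX hzne).trans_lt hzx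

lemma mem_of_isCompressedAt (hSi : IsCompressedAt X p i S) (hx : x ∈ parityClass X p)
    (hy : y ∈ S) (hk : key x < key y) (hxy : i ∈ x ↔ i ∈ y) : x ∈ S := by
  obtain ⟨hxX, hxp⟩ := mem_parityClass.1 hx
  by_cases hix : i ∈ x
  · have hiy := hxy.1 hix
    have hx' : x.erase i ∈ parityClass (X.erase i) (p + 1) := by
      refine mem_parityClass.2 ⟨erase_subset_erase i hxX, ?_⟩
      have := card_erase_add_one hix
      omega
    have hy' : y.erase i ∈ S.memberSubfamily i := mem_memberSubfamily.2
      ⟨by rwa [insert_erase hiy], notMem_erase i y⟩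
    have := (mem_memberSubfamily.1 <| hSi.2 _ hy' _ hx' <|
      (key_erase_lt_key_erase_iff hix hiy).2 hk).1
    rwa [insert_erase hix] at this
  · have hx' : x ∈ parityClass (X.erase i) p :=
      mem_parityClass.2 ⟨subset_erase.2 ⟨hxX, hix⟩, hxp⟩
    have hy' : y ∈ S.nonMemberSubfamily i :=
      mem_nonMemberSubfamily.2 ⟨hy, fun h => hix (hxy.2 h)⟩
    exact (mem_nonMemberSubfamily.1 (hSi.1 _ hy' _ hx' hk)).1

lemma eq_sdiff_of_isCompressedAt (hS : S ⊆ parityClass X p)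
    (hc : ∀ i ∈ X, IsCompressedAt X p i S) (hx : x ∈ parityClass X p) (hxS : x ∉ S)
    (hy : y ∈ S) (hk : key x < key y) : y = X \ x := by
  have hxX := (mem_parityClass.1 hx).1
  have hyX := (mem_parityClass.1 (hS hy)).1
  have hsplit : ∀ j ∈ X, ¬(j ∈ x ↔ j ∈ y) := fun j hj h =>
    hxS (mem_of_isCompressedAt (hc j hj) hx hy hk h)
  ext j
  rw [mem_sdiff]
  constructor
  · exact fun hj => ⟨hyX hj, fun hjx => hsplit j (hyX hj) (iff_of_true hjx hj)⟩
  · exact fun ⟨hj, hjx⟩ => by_contra fun hjy => hsplit j hj (iff_of_false hjx hjy)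

/-- Otherwise exchanging `max x₀` for the larger `d` would give a set strictly between `x₀` and
`y₀ = X \ x₀`. -/
lemma exists_mem_gt_of_gap (hx₀ : x₀ ∈ parityClass X p) (hy₀ : y₀ = X \ x₀)
    (hk : key x₀ < key y₀) (hz : z ∈ parityClass X p) (hzx : key z < key x₀)
    (hgap : ∀ w ∈ parityClass X p, key x₀ < key w → key y₀ ≤ key w) (hd : d ∈ X)
    (hdx : d ∉ x₀) : ∃ e ∈ x₀, d < e := by
  obtain ⟨hx₀X, hx₀p⟩ := mem_parityClass.1 hx₀
  have hX : X.Nonempty := ⟨d, hd⟩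
  have hx₀ne : x₀.Nonempty := by
    rw [nonempty_iff_ne_empty]
    rintro rfl
    rcases key_lt_key_iff.1 hzx with h | ⟨h, hb⟩
    · simp at h
    · rw [card_eq_zero.1 (h.trans card_empty)] at hb
      exact hb.false
  by_contra! hle
  set M := x₀.max' hx₀ne
  have hM := x₀.max'_mem hx₀ne
  have hMd : M < d := (hle M hM).lt_of_ne (ne_of_mem_of_not_mem hM hdx)
  have hcard := card_insert_erase hdx hM
  have hw : insert d (x₀.erase M) ∈ parityClass X p := mem_parityClass.2
    ⟨insert_subset hd ((erase_subset M x₀).trans hx₀X), hcard ▸ hx₀p⟩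
  refine (hgap _ hw ((key_lt_key_insert_erase_iff hdx hM).2 hMd)).not_gt ?_
  rcases (card_le_card_of_key_lt hk).lt_or_eq with hc | hc
  · exact key_lt_key_of_card_lt (hcard ▸ hc)
  have hox : X.min' hX ∈ x₀ := by
    by_contra hox
    have hoy : X.min' hX ∈ y₀ := hy₀ ▸ mem_sdiff.2 ⟨X.min'_mem hX, hox⟩
    exact (key_lt_key_of_min'_mem hX hx₀X hc.symm hoy hox).not_gt hk
  have hoM : X.min' hX ≠ M := by
    intro h
    have hx₀1 : x₀ = {X.min' hX} := eq_singleton_iff_unique_mem.2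
      ⟨hox, fun e he => le_antisymm (h ▸ x₀.le_max' e he) (X.min'_le e (hx₀X he))⟩
    have := key_singleton_min'_lt hX hx₀ (by simp [hx₀1]) hz hzx
    rw [← hx₀1] at this
    exact this.false
  exact key_lt_key_of_min'_mem hX (hy₀ ▸ sdiff_subset) (hcard.trans hc)
    (mem_insert_of_mem (mem_erase.2 ⟨hoM, hox⟩))
    (hy₀ ▸ fun h => (mem_sdiff.1 h).2 hox)

lemma nbhdIn_singleton_subset (hx₀ : x₀ ∈ parityClass X p) (hz : z ∈ parityClass X p)
    (hzx : key z < key x₀) (hmax : ∀ d ∈ X, d ∉ x₀ → ∃ e ∈ x₀, d < e) :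
    nbhdIn X {x₀} ⊆ nbhdIn X {v ∈ parityClass X p | key v < key x₀} := by
  intro w hw
  obtain ⟨hwX, _, hx, hadj⟩ := mem_nbhdIn.1 hw
  rw [mem_singleton.1 hx] at hadj
  obtain ⟨hx₀X, hx₀p⟩ := mem_parityClass.1 hx₀
  suffices ∃ v ⊆ X, #v % 2 = #x₀ % 2 ∧ key v < key x₀ ∧ (Q n).Adj v w by
    obtain ⟨v, hvX, hvp, hvk, hvw⟩ := this
    exact mem_nbhdIn.2 ⟨hwX, v, mem_filter.2 ⟨mem_parityClass.2 ⟨hvX, hvp ▸ hx₀p⟩, hvk⟩,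
      hvw⟩
  rcases Q_adj_iff_erase_or_insert.1 hadj with ⟨d, hd, rfl⟩ | ⟨d, hd, rfl⟩
  · have hcard := card_erase_add_one hd
    rcases (x₀.erase d).eq_empty_or_nonempty with he | ⟨e, he⟩
    · have hX : X.Nonempty := ⟨d, hx₀X hd⟩
      rw [he, card_empty] at hcard
      refine ⟨{X.min' hX}, singleton_subset_iff.2 (X.min'_mem hX), by simp [← hcard],
        key_singleton_min'_lt hX hx₀ hcard.symm hz hzx, ?_⟩
      simpa [he] using Q_adj_erase (mem_singleton_self (X.min' hX))
    · have hcard' := card_erase_add_one he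
      exact ⟨(x₀.erase d).erase e, (erase_subset _ _).trans
        ((erase_subset _ _).trans hx₀X), by omega, key_lt_key_of_card_lt (by omega),
        (Q_adj_erase he).symm⟩
  · obtain ⟨e, he, hde⟩ := hmax d (hwX (mem_insert_self d x₀)) hd
    have hd' : d ∉ x₀.erase e := fun h => hd (mem_of_mem_erase h)
    refine ⟨insert d (x₀.erase e), insert_subset (hwX (mem_insert_self d x₀))
      ((erase_subset e x₀).trans hx₀X), ?_, (key_insert_erase_lt_iff hd he).2 hde,
      (Q_adj_insert_insert_iff hd' hd).2 (Q_adj_erase he).symm⟩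
    rw [card_insert_erase hd he]

lemma card_nbhdIn_initSeg_le_of_isCompressedAt (hS : S ⊆ parityClass X p)
    (hc : ∀ i ∈ X, IsCompressedAt X p i S) (hx₀ : x₀ ∈ parityClass X p) (hx₀S : x₀ ∉ S)
    (hy₀ : y₀ ∈ S) (hk : key x₀ < key y₀) :
    #(nbhdIn X (initSeg key (parityClass X p) #S)) ≤ #(nbhdIn X S) := by
  set J := {z ∈ parityClass X p | key z < key x₀} with hJ
  have hx₀X := (mem_parityClass.1 hx₀).1
  have hy₀eq : y₀ = X \ x₀ := eq_sdiff_of_isCompressedAt hS hc hx₀ hx₀S hy₀ hk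
  have hlow : ∀ z ∈ parityClass X p, z ∉ S → key z < key y₀ → z = x₀ := fun z hz hzS hzk => by
    rw [← Finset.sdiff_sdiff_eq_self (mem_parityClass.1 hz).1,
      ← eq_sdiff_of_isCompressedAt hS hc hz hzS hy₀ hzk, hy₀eq, Finset.sdiff_sdiff_eq_self hx₀X]
  have hhigh : ∀ z ∈ S, key x₀ < key z → z = y₀ := fun z hz hzk =>
    (eq_sdiff_of_isCompressedAt hS hc hx₀ hx₀S hz hzk).trans hy₀eq.symm
  have hSeq : S = insert y₀ J := by
    ext z
    rw [mem_insert, mem_filter]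
    refine ⟨fun hz => ?_, ?_⟩
    · rcases lt_trichotomy (key z) (key x₀) with h | h | h
      · exact Or.inr ⟨hS hz, h⟩
      · exact absurd (key_injective h ▸ hz) hx₀S
      · exact Or.inl (hhigh z hz h)
    · rintro (rfl | ⟨hz, hzk⟩)
      · exact hy₀
      · exact by_contra fun hzS => (hlow z hz hzS (hzk.trans hk) ▸ hzk).false
  have hcard : #S = rank key (parityClass X p) x₀ + 1 := by
    rw [hSeq, card_insert_of_notMem fun h => (mem_filter.1 h).2.not_gt hk, rank]
  rw [hcard, initSeg_rank_add_one key_injective hx₀, ← hJ, hSeq, nbhdIn_insert, nbhdIn_insert]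
  rcases J.eq_empty_or_nonempty with hJe | ⟨z, hz⟩
  · rw [hJe, nbhdIn_empty, union_empty, union_empty, card_nbhdIn_singleton hx₀X,
      card_nbhdIn_singleton (hy₀eq ▸ sdiff_subset)]
  obtain ⟨hzp, hzk⟩ := mem_filter.1 hz
  have hgap : ∀ w ∈ parityClass X p, key x₀ < key w → key y₀ ≤ key w := fun w hw hxw =>
    le_of_not_gt fun hwy => by
      by_cases hwS : w ∈ S
      · exact (hhigh w hwS hxw ▸ hwy).false
      · exact (hlow w hw hwS hwy ▸ hxw).false
  rw [union_eq_right.2 (nbhdIn_singleton_subset hx₀ hzp hzk fun d hd hdx =>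
    exists_mem_gt_of_gap hx₀ hy₀eq hk hzp hzk hgap hd hdx)]
  exact card_le_card subset_union_right

lemma initSegMinNbhd_of_forall_erase (ih : ∀ i ∈ X, InitSegMinNbhd (X.erase i)) :
    InitSegMinNbhd X := by
  intro p S hS
  induction hμ : ∑ x ∈ S, key x using Nat.strong_induction_on generalizing S with
  | _ μ ihμ =>
  by_cases hc : ∀ i ∈ X, IsCompressedAt X p i S
  · by_cases hdown : IsDownset key (parityClass X p) S
    · rw [← hdown.eq_initSeg key_injective hS]
    · simp only [IsDownset, not_forall] at hdown
      obtain ⟨y, hy, x, hx, hk, hxS⟩ := hdown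
      exact card_nbhdIn_initSeg_le_of_isCompressedAt hS hc hx hxS hy hk
  · push Not at hc
    obtain ⟨i, hi, hSi⟩ := hc
    calc #(nbhdIn X (initSeg key (parityClass X p) #S))
        = #(nbhdIn X (initSeg key (parityClass X p) #(compress X p i S))) := by
          rw [card_compress hS]
      _ ≤ #(nbhdIn X (compress X p i S)) :=
        ihμ _ (hμ ▸ sum_key_compress_lt hS hSi) _ (compress_subset hi) rfl
      _ ≤ #(nbhdIn X S) := card_nbhdIn_compress_le hi hS (ih i hi)

theorem initSegMinNbhd (X : Finset (Fin n)) : InitSegMinNbhd X := by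
  induction X using strongInduction with
  | H X ih => exact initSegMinNbhd_of_forall_erase fun i hi => ih _ (erase_ssubset hi)

end Harper

/-- Harper-type theorem: initial segments of weightlex-even minimize the neighborhood
among even-weight sets of the same size. -/
theorem initSeg_min_nbhd (n k : ℕ) (A C : Finset (Finset (Fin n)))
    (hA : ∀ x ∈ A, Even x.card) (hAcard : A.card = k)
    (hC : IsInitSeg (fun x => Even x.card) C) (hCcard : C.card = k) :
    (nbhd (Q n) C).card ≤ (nbhd (Q n) A).card := by
  have heven : ∀ S : Finset (Finset (Fin n)), (∀ x ∈ S, Even x.card) →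
      S ⊆ Harper.parityClass univ 0 := fun S h x hx =>
    Harper.mem_parityClass.2 ⟨subset_univ x, Nat.even_iff.1 (h x hx)⟩
  have hCdown : Harper.IsDownset Harper.key (Harper.parityClass univ 0) C := fun x hx y hy hk =>
    hC.2 y x hx (Nat.even_iff.2 (Harper.mem_parityClass.1 hy).2) (Harper.wlexLt_of_key_lt hk)
  rw [Harper.nbhd_eq_nbhdIn_univ, Harper.nbhd_eq_nbhdIn_univ,
    hCdown.eq_initSeg Harper.key_injective (heven C hC.1), hCcard, ← hAcard]
  exact Harper.initSegMinNbhd univ 0 A (heven A hA)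
end

section
/- If B ⊆ Q^n_even is compressed (i.e., (i,j)-compressed for all pairs i,j) but not an initial segment of weightlex-even, then for any x ∉ B and y ∈ B with x ≺ y (in weightlex-even order), exactly one of the following holds: (1) |x ∩ y| = 1 and x ∪ y = [n]; (2) |x ∩ y| = 0 and x ∪ y = [n] \ {k} for some k; (3) x = y^c. -/
/-! If `x ∉ B`, `y ∈ B`, `x ≺ y` agreed on two coordinates `i ≠ j`, deleting `i` and `j` would
keep `x ≺ y` and put both sets into the same `(i,j)`-part of `B`; that part is a weightlex
initial segment, so `x ∈ B`. Hence `x` and `y` agree on at most one coordinate `k`, and the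
three cases are: no such `k` (`x = yᶜ`), `k ∈ x ∩ y`, and `k ∉ x ∪ y`. -/

open Finset
open scoped Classical

variable {V : Type*} [Fintype V]

/-- The `(bi,bj)`-part of a family `A` with respect to coordinates `i, j`: the members
of `A` whose membership pattern on `{i,j}` is `(bi,bj)`, with `i` and `j` removed. -/
noncomputable def part {n : ℕ} (i j : Fin n) (bi bj : Bool)
    (A : Finset (Finset (Fin n))) : Finset (Finset (Fin n)) :=
  (A.filter fun x => (i ∈ x ↔ bi = true) ∧ (j ∈ x ↔ bj = true)).image fun x => x \ {i, j}

/-- The class of sets in which the `(bi,bj)`-part of an `(i,j)`-compressed even family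
must form a weightlex initial segment: sets avoiding `i, j` of the appropriate parity. -/
def partPred {n : ℕ} (i j : Fin n) (bi bj : Bool) (x : Finset (Fin n)) : Prop :=
  i ∉ x ∧ j ∉ x ∧ Even (x.card + (cond bi 1 0) + (cond bj 1 0))

/-- `A` is `(i,j)`-compressed for all pairs `i ≠ j`: each part is already an initial
segment of the appropriate weightlex order. -/
def Compressed {n : ℕ} (A : Finset (Finset (Fin n))) : Prop :=
  ∀ i j : Fin n, i ≠ j → ∀ bi bj : Bool, IsInitSeg (partPred i j bi bj) (part i j bi bj A)

section SdiffPair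

variable {α : Type*} [DecidableEq α] {i j : α} {s t : Finset α}

lemma card_sdiff_pair_add_ite (hij : i ≠ j) (s : Finset α) :
    (s \ {i, j}).card + (if i ∈ s then 1 else 0) + (if j ∈ s then 1 else 0) = s.card := by
  rw [sdiff_insert, sdiff_singleton_eq_erase, card_erase_eq_ite, card_erase_eq_ite]
  simp only [mem_erase, ne_eq, hij, not_false_eq_true, true_and]
  by_cases hi : i ∈ s <;> by_cases hj : j ∈ s <;> simp only [hi, hj, if_true, if_false, add_zero]
  · have := one_lt_card.2 ⟨i, hi, j, hj, hij⟩
    omega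
  · have := card_pos.2 ⟨i, hi⟩
    omega
  · have := card_pos.2 ⟨j, hj⟩
    omega

lemma symmDiff_sdiff_pair (hi : i ∈ s ↔ i ∈ t) (hj : j ∈ s ↔ j ∈ t) :
    symmDiff (s \ {i, j}) (t \ {i, j}) = symmDiff s t := by
  ext a
  simp only [mem_symmDiff, mem_sdiff, mem_insert, mem_singleton]
  rcases eq_or_ne a i with rfl | hai
  · tauto
  rcases eq_or_ne a j with rfl | haj
  · tauto
  tauto

lemma eq_of_sdiff_pair_eq (h : s \ {i, j} = t \ {i, j}) (hi : i ∈ s ↔ i ∈ t)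
    (hj : j ∈ s ↔ j ∈ t) : s = t := by
  ext a
  rcases eq_or_ne a i with rfl | hai
  · exact hi
  rcases eq_or_ne a j with rfl | haj
  · exact hj
  simpa [hai, haj] using Finset.ext_iff.mp h a

end SdiffPair

section WeightLex

variable {n : ℕ} {i j : Fin n} {x y : Finset (Fin n)}

lemma wlexLt_sdiff_pair (hij : i ≠ j) (hi : i ∈ x ↔ i ∈ y) (hj : j ∈ x ↔ j ∈ y)
    (hxy : wlexLt x y) : wlexLt (x \ {i, j}) (y \ {i, j}) := by
  have hx := card_sdiff_pair_add_ite hij x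
  have hy := card_sdiff_pair_add_ite hij y
  simp only [hi, hj] at hx
  rcases hxy with hlt | ⟨hcard, a, hax, hay, hmin⟩
  · left
    omega
  · right
    refine ⟨by omega, a, ?_, fun h => hay (mem_sdiff.1 h).1, ?_⟩
    · have hai : a ≠ i := by rintro rfl; exact hay (hi.1 hax)
      have haj : a ≠ j := by rintro rfl; exact hay (hj.1 hax)
      simp [hax, hai, haj]
    · rwa [symmDiff_sdiff_pair hi hj]

lemma partPred_sdiff_pair (hij : i ≠ j) (hx : Even x.card) :
    partPred i j (decide (i ∈ x)) (decide (j ∈ x)) (x \ {i, j}) := by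
  refine ⟨by simp, by simp, ?_⟩
  simpa only [Bool.cond_decide, card_sdiff_pair_add_ite hij x] using hx

lemma sdiff_pair_mem_part {A : Finset (Finset (Fin n))} (hy : y ∈ A) :
    y \ {i, j} ∈ part i j (decide (i ∈ y)) (decide (j ∈ y)) A :=
  mem_image_of_mem _ (mem_filter.2 ⟨hy, by simp, by simp⟩)

lemma mem_of_sdiff_pair_mem_part {A : Finset (Finset (Fin n))}
    (hx : x \ {i, j} ∈ part i j (decide (i ∈ x)) (decide (j ∈ x)) A) : x ∈ A := by
  obtain ⟨z, hz, hzx⟩ := mem_image.1 hx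
  obtain ⟨hzA, hzi, hzj⟩ := mem_filter.1 hz
  rwa [← eq_of_sdiff_pair_eq hzx (by simpa using hzi) (by simpa using hzj)]

lemma Compressed.mem_of_wlexLt {B : Finset (Finset (Fin n))} (hB : Compressed B)
    (hy : y ∈ B) (hx : Even x.card) (hxy : wlexLt x y) (hij : i ≠ j)
    (hi : i ∈ x ↔ i ∈ y) (hj : j ∈ x ↔ j ∈ y) : x ∈ B := by
  have hpart := sdiff_pair_mem_part (i := i) (j := j) hy
  rw [← decide_eq_decide.2 hi, ← decide_eq_decide.2 hj] at hpart
  exact mem_of_sdiff_pair_mem_part <|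
    (hB i j hij _ _).2 _ _ hpart (partPred_sdiff_pair hij hx) (wlexLt_sdiff_pair hij hi hj hxy)

end WeightLex

lemma Finset.inter_union_cases_of_agree_subsingleton {α : Type*} [Fintype α] [DecidableEq α]
    {x y : Finset α} (h : ∀ a b, (a ∈ x ↔ a ∈ y) → (b ∈ x ↔ b ∈ y) → a = b) :
    ((x ∩ y).card = 1 ∧ x ∪ y = univ) ∨ (x ∩ y = ∅ ∧ ∃ k, x ∪ y = univ \ {k}) ∨ x = yᶜ := by
  by_cases hagree : ∃ k, (k ∈ x ↔ k ∈ y)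
  · obtain ⟨k, hk⟩ := hagree
    have honly : ∀ a, a ≠ k → (a ∈ x ↔ a ∉ y) := fun a hak => by
      have := mt (h a k · hk) hak
      tauto
    by_cases hkx : k ∈ x
    · refine Or.inl ⟨card_eq_one.2 ⟨k, ?_⟩, ?_⟩ <;> ext a <;> rcases eq_or_ne a k with rfl | hak
      all_goals simp_all [em']
    · refine Or.inr (Or.inl ⟨?_, k, ?_⟩) <;> ext a <;> rcases eq_or_ne a k with rfl | hak
      all_goals simp_all [em']
  · push Not at hagree
    refine Or.inr (Or.inr (ext fun a => ?_))
    have := hagree a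
    rw [mem_compl]
    tauto

theorem compressed_not_initSeg_structure_general (n : ℕ) (B : Finset (Finset (Fin n)))
    (hcomp : Compressed B)
    (x y : Finset (Fin n)) (hx : x ∉ B) (hxeven : Even x.card)
    (hy : y ∈ B) (hxy : wlexLt x y) :
    ((x ∩ y).card = 1 ∧ x ∪ y = Finset.univ) ∨
      (x ∩ y = ∅ ∧ ∃ k : Fin n, x ∪ y = Finset.univ \ {k}) ∨
      x = yᶜ :=
  Finset.inter_union_cases_of_agree_subsingleton fun _ _ hi hj => by_contra fun hij =>
    hx (hcomp.mem_of_wlexLt hy hxeven hxy hij hi hj)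

/-- If $B ⊆ Q^n_{even}$ is compressed but not an initial segment of weightlex-even,
then any $x ∉ B$, $y ∈ B$ with $x ≺ y$ satisfy one of three structure conditions. -/
theorem compressed_not_initSeg_structure (n : ℕ) (B : Finset (Finset (Fin n)))
    (hB : ∀ x ∈ B, Even x.card) (hcomp : Compressed B)
    (hnotinit : ¬ IsInitSeg (fun x => Even x.card) B)
    (x y : Finset (Fin n)) (hx : x ∉ B) (hxeven : Even x.card)
    (hy : y ∈ B) (hxy : wlexLt x y) :
    ((x ∩ y).card = 1 ∧ x ∪ y = Finset.univ) ∨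
      (x ∩ y = ∅ ∧ ∃ k : Fin n, x ∪ y = Finset.univ \ {k}) ∨
      x = yᶜ :=
  compressed_not_initSeg_structure_general n B hcomp x y hx hxeven hy hxy
end
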